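/- (Equivalence of GOPT and balanced OT, discrete.) Define ĉ ∈ ℝ^{(n+1)×(m+1)} by ĉ_{ij} = c_{ij} − (λ₁)ᵢ − (λ₂)ⱼ for i ≤ n, j ≤ m, and ĉ_{ij} = 0 otherwise; define p̂ = (p₁,…,pₙ, ‖q‖) and q̂ = (q₁,…,q_m, ‖p‖). For γ ∈ Γ_≤(p,q), let γ̂ be its image under the bijection γ̂ = γ augmented with row/column slacks and mass |γ| at (n+1, m+1). Then γ̂ minimizes ⟨ĉ, γ̂⟩ over Γ(p̂, q̂) if and only if γ minimizes ⟨c − λ₁⊕λ₂, γ⟩ over Γ_≤(p,q). -/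
import Mathlib

open scoped BigOperators

/-- The feasible set `Γ_≤(p,q)` in the discrete setting. -/
def GammaLE {n m : ℕ} (p : Fin n → ℝ) (q : Fin m → ℝ) (γ : Fin n → Fin m → ℝ) : Prop :=
  (∀ i j, 0 ≤ γ i j) ∧ (∀ i, ∑ j, γ i j ≤ p i) ∧ (∀ j, ∑ i, γ i j ≤ q j)

/-- Augmented plan: `none` plays the role of the auxiliary point. -/
noncomputable def hatPlan {n m : ℕ} (p : Fin n → ℝ) (q : Fin m → ℝ)
    (γ : Fin n → Fin m → ℝ) : Option (Fin n) → Option (Fin m) → ℝ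
  | some i, some j => γ i j
  | some i, none => p i - ∑ j, γ i j
  | none, some j => q j - ∑ i, γ i j
  | none, none => ∑ i, ∑ j, γ i j

/-- Augmented cost. -/
def hatCost {n m : ℕ} (c : Fin n → Fin m → ℝ) (l1 : Fin n → ℝ) (l2 : Fin m → ℝ) :
    Option (Fin n) → Option (Fin m) → ℝ
  | some i, some j => c i j - l1 i - l2 j
  | _, _ => 0

/-- Augmented marginals. -/
noncomputable def hatP {n m : ℕ} (p : Fin n → ℝ) (q : Fin m → ℝ) :
    Option (Fin n) → ℝ
  | some i => p i
  | none => ∑ j, q j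

noncomputable def hatQ {n m : ℕ} (p : Fin n → ℝ) (q : Fin m → ℝ) :
    Option (Fin m) → ℝ
  | some j => q j
  | none => ∑ i, p i

/-- Couplings of the augmented marginals. -/
def GammaEq {n m : ℕ} (p : Fin n → ℝ) (q : Fin m → ℝ)
    (γh : Option (Fin n) → Option (Fin m) → ℝ) : Prop :=
  (∀ i j, 0 ≤ γh i j) ∧ (∀ i, ∑ j, γh i j = hatP p q i) ∧
    (∀ j, ∑ i, γh i j = hatQ p q j)

lemma hatPlan_mem {n m : ℕ} (p : Fin n → ℝ) (q : Fin m → ℝ)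
    (γ : Fin n → Fin m → ℝ) (hγ : GammaLE p q γ) :
    GammaEq p q (hatPlan p q γ) := by
  obtain ⟨h0, hr, hc⟩ := hγ
  refine ⟨?_, ?_, ?_⟩
  · rintro (_|i) (_|j) <;> simp [hatPlan]
    · exact Finset.sum_nonneg fun i _ => Finset.sum_nonneg fun j _ => h0 i j
    · exact hc j
    · exact hr i
    · exact h0 i j
  · rintro (_|i)
    · simp only [hatPlan, Fintype.sum_option, hatP]
      rw [Finset.sum_comm, ← Finset.sum_add_distrib]
      simp
    · simp [hatPlan, Fintype.sum_option, hatP]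
  · rintro (_|j)
    · simp [hatPlan, Fintype.sum_option, hatQ, ← Finset.sum_add_distrib]
    · simp [hatPlan, Fintype.sum_option, hatQ]

lemma cost_eq {n m : ℕ} (c : Fin n → Fin m → ℝ) (l1 : Fin n → ℝ) (l2 : Fin m → ℝ)
    (γh : Option (Fin n) → Option (Fin m) → ℝ) :
    ∑ i, ∑ j, hatCost c l1 l2 i j * γh i j
      = ∑ i, ∑ j, (c i j - l1 i - l2 j) * γh (some i) (some j) := by
  rw [Fintype.sum_option]
  simp [Fintype.sum_option, hatCost]

lemma cost_hatPlan {n m : ℕ} (p : Fin n → ℝ) (q : Fin m → ℝ)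
    (c : Fin n → Fin m → ℝ) (l1 : Fin n → ℝ) (l2 : Fin m → ℝ)
    (γ : Fin n → Fin m → ℝ) :
    ∑ i, ∑ j, hatCost c l1 l2 i j * hatPlan p q γ i j
      = ∑ i, ∑ j, (c i j - l1 i - l2 j) * γ i j := by
  rw [cost_eq]; rfl

lemma restrict_mem {n m : ℕ} (p : Fin n → ℝ) (q : Fin m → ℝ)
    (γh : Option (Fin n) → Option (Fin m) → ℝ) (h : GammaEq p q γh) :
    GammaLE p q (fun i j => γh (some i) (some j)) := by
  obtain ⟨h0, hr, hc⟩ := h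
  refine ⟨fun i j => h0 _ _, fun i => ?_, fun j => ?_⟩
  · have := hr (some i)
    rw [Fintype.sum_option] at this
    simp [hatP] at this
    linarith [h0 (some i) none]
  · have := hc (some j)
    rw [Fintype.sum_option] at this
    simp [hatQ] at this
    linarith [h0 none (some j)]

theorem gopt_ot_equivalence {n m : ℕ}
    (p : Fin n → ℝ) (q : Fin m → ℝ) (c : Fin n → Fin m → ℝ)
    (l1 : Fin n → ℝ) (l2 : Fin m → ℝ)
    (hp : ∀ i, 0 ≤ p i) (hq : ∀ j, 0 ≤ q j)
    (hl1 : ∀ i, 0 ≤ l1 i) (hl2 : ∀ j, 0 ≤ l2 j)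
    (γ : Fin n → Fin m → ℝ) (hγ : GammaLE p q γ) :
    ((GammaEq p q (hatPlan p q γ) ∧
        ∀ γh, GammaEq p q γh →
          ∑ i, ∑ j, hatCost c l1 l2 i j * hatPlan p q γ i j
            ≤ ∑ i, ∑ j, hatCost c l1 l2 i j * γh i j)
      ↔ (∀ γ', GammaLE p q γ' →
          ∑ i, ∑ j, (c i j - l1 i - l2 j) * γ i j
            ≤ ∑ i, ∑ j, (c i j - l1 i - l2 j) * γ' i j)) := by
  have key := cost_hatPlan p q c l1 l2
  constructor
  · rintro ⟨_, hmin⟩ γ' hγ'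
    have := hmin (hatPlan p q γ') (hatPlan_mem p q γ' hγ')
    rwa [key γ, key γ'] at this
  · intro hmin
    refine ⟨hatPlan_mem p q γ hγ, fun γh hγh => ?_⟩
    rw [key γ, cost_eq]
    exact hmin _ (restrict_mem p q γh hγh)
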